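/- Let F_{S1} := x0^9 + (x1^3 − x2^3)·(x2^3 − x3^3)·(x3^3 − x1^3) and F_{S2} := F_{S1}·(x0^9 − x1^3·x2^3·x3^3) + x1^6·x2^6·x3^6 in ℂ[x0, x1, x2, x3], and let ω ∈ ℂ be a primitive cube root of unity. For every nonzero vector (a0, a1, a2, a3) ∈ ℂ⁴, the following are equivalent: (i) a1 = 0, the polynomial x0^9 − x2^6·x3^3 + x2^3·x3^6 vanishes at (a0, a2, a3), and F_{S2} together with all four of its partial derivatives vanishes at (a0, a1, a2, a3); (ii) (a0, a1, a2, a3) is a nonzero scalar multiple of one of the five vectors (0,0,0,1), (0,0,1,0), (0,0,1,1), (0,0,1,ω), (0,0,1,ω²). (That is, the curve D1 passes through exactly 5 singular points of S2.) -/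
import Mathlib


open MvPolynomial

/-- The homogeneous degree-9 polynomial defining the surface `S1 ⊂ ℙ³_ℂ`. -/
noncomputable def FS1 : MvPolynomial (Fin 4) ℂ :=
  X 0 ^ 9 + (X 1 ^ 3 - X 2 ^ 3) * (X 2 ^ 3 - X 3 ^ 3) * (X 3 ^ 3 - X 1 ^ 3)

/-- The homogeneous degree-18 polynomial defining the surface `S2 ⊂ ℙ³_ℂ`. -/
noncomputable def FS2 : MvPolynomial (Fin 4) ℂ :=
  FS1 * (X 0 ^ 9 - X 1 ^ 3 * X 2 ^ 3 * X 3 ^ 3) + X 1 ^ 6 * X 2 ^ 6 * X 3 ^ 6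

lemma ep0 (a : Fin 4 → ℂ) : eval a (pderiv 0 FS2) =
    9 * a 0 ^ 8 * (a 0 ^ 9 - a 1 ^ 3 * a 2 ^ 3 * a 3 ^ 3) +
      (a 0 ^ 9 + (a 1 ^ 3 - a 2 ^ 3) * (a 2 ^ 3 - a 3 ^ 3) * (a 3 ^ 3 - a 1 ^ 3)) * (9 * a 0 ^ 8) := by
  simp [FS2, FS1, pderiv_mul, pderiv_pow, pderiv_X]
  ring

lemma sing_of (a : Fin 4 → ℂ) (h0 : a 0 = 0) (h1 : a 1 = 0) :
    eval a FS2 = 0 ∧ ∀ i : Fin 4, eval a (pderiv i FS2) = 0 := by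
  constructor
  · simp [FS2, FS1, h0, h1]
  · intro i
    fin_cases i <;>
      simp [FS2, FS1, pderiv_mul, pderiv_pow, pderiv_X, h0, h1]

/-- The curve `D1 = {x1 = 0, x0⁹ − x2⁶x3³ + x2³x3⁶ = 0}` passes through exactly five
singular points of `S2`, namely `[0:0:0:1]`, `[0:0:1:0]`, `[0:0:1:1]`, `[0:0:1:ω]`,
`[0:0:1:ω²]`, where `ω` is a primitive cube root of unity. -/
theorem stmt_11 (ω : ℂ) (hω : IsPrimitiveRoot ω 3) (a : Fin 4 → ℂ) (ha : a ≠ 0) :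
    (a 1 = 0 ∧
      eval a (X 0 ^ 9 - X 2 ^ 6 * X 3 ^ 3 + X 2 ^ 3 * X 3 ^ 6 : MvPolynomial (Fin 4) ℂ) = 0 ∧
      eval a FS2 = 0 ∧ ∀ i : Fin 4, eval a (pderiv i FS2) = 0) ↔
    (∃ c : ℂ, c ≠ 0 ∧
      (a = c • ![0, 0, 0, 1] ∨ a = c • ![0, 0, 1, 0] ∨ a = c • ![0, 0, 1, 1] ∨
        a = c • ![0, 0, 1, ω] ∨ a = c • ![0, 0, 1, ω ^ 2])) := by
  have hω3 : ω ^ 3 = 1 := hω.pow_eq_one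
  have hωne : ω ≠ 1 := hω.ne_one (by norm_num)
  have hsum : ω ^ 2 + ω + 1 = 0 := by
    have h : (ω - 1) * (ω ^ 2 + ω + 1) = 0 := by linear_combination hω3
    rcases mul_eq_zero.mp h with h | h
    · exact absurd (sub_eq_zero.mp h) hωne
    · exact h
  constructor
  · rintro ⟨h1, hE, _, hder⟩
    simp only [map_add, map_sub, map_mul, map_pow, eval_X] at hE
    have hd0 := hder 0
    rw [ep0] at hd0
    simp only [h1] at hd0
    have h17 : a 0 ^ 17 = 0 := by linear_combination hd0 / 9 - a 0 ^ 8 * hE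
    have h0 : a 0 = 0 := pow_eq_zero_iff (by norm_num) |>.mp h17
    rw [h0] at hE
    have hE' : a 2 ^ 3 * a 3 ^ 3 * (a 3 ^ 3 - a 2 ^ 3) = 0 := by linear_combination hE
    by_cases h2 : a 2 = 0
    · have h3 : a 3 ≠ 0 := by
        intro h3
        exact ha (funext fun i => by fin_cases i <;> simp [h0, h1, h2, h3])
      exact ⟨a 3, h3, Or.inl (funext fun i => by fin_cases i <;> simp [h0, h1, h2])⟩
    · by_cases h3 : a 3 = 0
      · exact ⟨a 2, h2, Or.inr (Or.inl (funext fun i => by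
          fin_cases i <;> simp [h0, h1, h3]))⟩
      · have hcube : a 3 ^ 3 = a 2 ^ 3 := by
          rcases mul_eq_zero.mp hE' with h | h
          · rcases mul_eq_zero.mp h with h | h
            · exact absurd (pow_eq_zero_iff (by norm_num) |>.mp h) h2
            · exact absurd (pow_eq_zero_iff (by norm_num) |>.mp h) h3
          · exact sub_eq_zero.mp h
        have hfac : (a 3 - a 2) * (a 3 - ω * a 2) * (a 3 - ω ^ 2 * a 2) = 0 := by
          linear_combination hcube + (-(a 2) * a 3 ^ 2 + a 2 ^ 2 * a 3) * hsum +
            (a 2 ^ 2 * a 3 - a 2 ^ 3) * hω3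
        refine ⟨a 2, h2, ?_⟩
        rcases mul_eq_zero.mp hfac with h | h
        · rcases mul_eq_zero.mp h with h | h
          · exact Or.inr (Or.inr (Or.inl (funext fun i => by
              fin_cases i <;> simp [h0, h1, sub_eq_zero.mp h])))
          · exact Or.inr (Or.inr (Or.inr (Or.inl (funext fun i => by
              fin_cases i <;> simp [h0, h1, sub_eq_zero.mp h, mul_comm]))))
        · exact Or.inr (Or.inr (Or.inr (Or.inr (funext fun i => by
            fin_cases i <;> simp [h0, h1, sub_eq_zero.mp h, mul_comm]))))
  · rintro ⟨c, hc, hv⟩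
    have key : a 0 = 0 ∧ a 1 = 0 ∧ (a 2 ^ 3 * a 3 ^ 6 = a 2 ^ 6 * a 3 ^ 3) := by
      rcases hv with h | h | h | h | h
      · exact h ▸ ⟨by simp, by simp, by simp⟩
      · exact h ▸ ⟨by simp, by simp, by simp⟩
      · exact h ▸ ⟨by simp, by simp, by simp [mul_comm]⟩
      · refine h ▸ ⟨by simp, by simp, ?_⟩
        simp only [Pi.smul_apply, Matrix.cons_val_two, Matrix.tail_cons, Matrix.head_cons,
          Matrix.cons_val_three, smul_eq_mul]
        linear_combination (c ^ 9 * ω ^ 3) * hω3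
      · refine h ▸ ⟨by simp, by simp, ?_⟩
        simp only [Pi.smul_apply, Matrix.cons_val_two, Matrix.tail_cons, Matrix.head_cons,
          Matrix.cons_val_three, smul_eq_mul]
        linear_combination (c ^ 9 * ω ^ 9 + c ^ 9 * ω ^ 6) * hω3
    obtain ⟨h0, h1, hE⟩ := key
    obtain ⟨hF, hD⟩ := sing_of a h0 h1
    refine ⟨h1, ?_, hF, hD⟩
    simp only [map_add, map_sub, map_mul, map_pow, eval_X]
    rw [h0]
    linear_combination hE
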